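/- Let N, k, J be positive integers with N > 2^J (k+1), let Φ_{k,1} and Φ_{k,2^J} be the circulant matrices of the stencils φ_{k,1} and φ_{k,2^J}, and for each i let P_{2^i} be the N×N 0-1 shift-sum matrix with shift 2^i. Then for every permutation σ of {0, 1, …, J−1}, the decomposition Φ_{k,2^J} = P_{2^{σ(J−1)}}^{k+1} P_{2^{σ(J−2)}}^{k+1} ⋯ P_{2^{σ(0)}}^{k+1} Φ_{k,1} holds; i.e., the product may be taken in any order. -/

import Mathlib

open Finset Matrix

/-- The scale-`j` order-`k` multiscale finite-difference stencil, as a vector in `ℝ^N`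
(0-indexed by naturals `m < N`). -/
noncomputable def phiR (N k j : ℕ) (m : ℕ) : ℝ :=
  if m = 0 then (-1 : ℝ) ^ k
  else if m ≤ N - j * (k + 1) then 0
  else (-1 : ℝ) ^ (k + (N - m) / j) * (Nat.choose k ((N - m) / j) : ℝ)

/-- The `N × N` circulant matrix of the stencil `φ_{k,j}`:
`(Φ_{k,j})_{m,n} = (φ_{k,j})_{(m - n) mod N}`. -/
noncomputable def PhiMat (N k j : ℕ) : Matrix (Fin N) (Fin N) ℝ :=
  Matrix.of fun m n => phiR N k j (((m : ℕ) + N - (n : ℕ)) % N)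

/-- The `N × N` 0-1 shift-sum matrix `P_s` (0-indexed): entry `(m, n)` is `1` if `n = m`
or `n = (m + s) mod N`, and `0` otherwise. -/
def Pmat (N s : ℕ) : Matrix (Fin N) (Fin N) ℝ :=
  Matrix.of fun m n =>
    if ((n : ℕ) = (m : ℕ) ∨ (n : ℕ) = ((m : ℕ) + s) % N) then 1 else 0

/-!
All matrices involved are polynomials in the cyclic shift `S` (`S m n = 1` iff `n ≡ m + 1`):
`P_s = 1 + S ^ s`, and `Φ_{k,j} = p_{k,j}(S)` for
`p_{k,j} = (-1)^k (1 + X + ⋯ + X^(j-1)) (1 - X^j)^k`, whose coefficient of `X^r` is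
`(-1)^(k + ⌊r/j⌋) C(k, ⌊r/j⌋)`; the entry `φ_{k,j}(d)` is the coefficient of `X^(N-d)`.
From `1 + ⋯ + X^(2j-1) = (1 + X^j)(1 + ⋯ + X^(j-1))` and `1 - X^(2j) = (1 + X^j)(1 - X^j)`
we get `p_{k,2j} = (1 + X^j)^(k+1) p_{k,j}`, hence `p_{k,2^J} = ∏_i (1 + X^(2^i))^(k+1) p_{k,1}`;
the order of the factors is irrelevant because polynomials in `S` commute.
-/

open Polynomial

variable {R : Type*}

theorem Nat.mod_eq_ite_of_lt_two_mul {x N : ℕ} (h : x < 2 * N) :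
    x % N = if x < N then x else x - N := by
  split_ifs with hx
  · exact Nat.mod_eq_of_lt hx
  · rw [Nat.mod_eq_sub_mod (by omega), Nat.mod_eq_of_lt (by omega)]

theorem Nat.eq_add_mod_iff {N m n i : ℕ} (hm : m < N) (hn : n < N) (hi : i < N) :
    n = (m + i) % N ↔ i = (n + N - m) % N := by
  rw [Nat.mod_eq_ite_of_lt_two_mul (by omega),
    Nat.mod_eq_ite_of_lt_two_mul (x := n + N - m) (by omega)]
  split_ifs <;> omega

theorem Nat.add_sub_mod_eq_sub_mod_add_sub {N a b : ℕ} (ha : a < N) (hb : b < N) :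
    (a + N - b) % N = (N - (b + N - a) % N) % N := by
  rw [Nat.mod_eq_ite_of_lt_two_mul (x := N - _) (by omega),
    Nat.mod_eq_ite_of_lt_two_mul (x := a + N - b) (by omega),
    Nat.mod_eq_ite_of_lt_two_mul (x := b + N - a) (by omega)]
  split_ifs <;> omega

def shiftMat (R : Type*) [Zero R] [One R] (N : ℕ) : Matrix (Fin N) (Fin N) R :=
  Matrix.of fun m n => if (n : ℕ) = ((m : ℕ) + 1) % N then 1 else 0

theorem shiftMat_pow_apply [Semiring R] (N r : ℕ) (m n : Fin N) :
    (shiftMat R N ^ r) m n = if (n : ℕ) = ((m : ℕ) + r) % N then 1 else 0 := by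
  induction r generalizing n with
  | zero =>
    simp only [pow_zero, Matrix.one_apply, add_zero, Nat.mod_eq_of_lt m.isLt, Fin.ext_iff, eq_comm]
  | succ r ih =>
    let t₀ : Fin N := ⟨((m : ℕ) + r) % N, Nat.mod_lt _ m.pos⟩
    rw [pow_succ, Matrix.mul_apply, Finset.sum_eq_single t₀]
    · rw [ih, if_pos rfl, one_mul]
      simp only [shiftMat, of_apply, t₀, Nat.mod_add_mod, add_assoc]
    · intro t _ ht
      rw [ih, if_neg (fun h => ht (Fin.ext h)), zero_mul]
    · simp

theorem aeval_shiftMat_apply [CommSemiring R] {N : ℕ} {p : R[X]} (hp : p.natDegree < N)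
    (m n : Fin N) : aeval (shiftMat R N) p m n = p.coeff (((n : ℕ) + N - m) % N) := by
  set r₀ := ((n : ℕ) + N - m) % N
  have hr₀ : r₀ < N := Nat.mod_lt _ m.pos
  rw [aeval_eq_sum_range' hp, Matrix.sum_apply, Finset.sum_eq_single_of_mem r₀ (by simpa)]
  · simp [shiftMat_pow_apply, (Nat.eq_add_mod_iff m.isLt n.isLt hr₀).2 rfl]
  · intro i hi hne
    rw [Matrix.smul_apply, shiftMat_pow_apply,
      if_neg (fun h => hne ((Nat.eq_add_mod_iff m.isLt n.isLt (by simpa using hi)).1 h)), smul_zero]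

theorem Pmat_eq_aeval {N s : ℕ} (hs : 0 < s) (hsN : s < N) :
    Pmat N s = aeval (shiftMat ℝ N) (1 + X ^ s : ℝ[X]) := by
  ext m n
  have hne : ((m : ℕ) + s) % N ≠ m := by
    rw [Nat.mod_eq_ite_of_lt_two_mul (by omega)]
    split_ifs <;> omega
  simp only [Pmat, Matrix.of_apply, map_add, map_one, map_pow, aeval_X, Matrix.add_apply,
    Matrix.one_apply, shiftMat_pow_apply, Fin.ext_iff]
  by_cases h₁ : (n : ℕ) = m
  · simp [h₁, hne.symm]
  · by_cases h₂ : (n : ℕ) = ((m : ℕ) + s) % N <;> simp [h₁, h₂, Ne.symm h₁, hne.symm]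

section Stencil

theorem coeff_one_sub_X_pow [CommRing R] (k i : ℕ) :
    ((1 - X : R[X]) ^ k).coeff i = (-1) ^ i * k.choose i := by
  have hsum : (1 - X : R[X]) ^ k =
      ∑ m ∈ range (k + 1), C ((-1) ^ m * (k.choose m : R)) * X ^ m := by
    rw [sub_eq_neg_add, add_pow]
    refine sum_congr rfl fun m _ => ?_
    rw [neg_pow, one_pow, mul_one, C_mul, C_pow, C_neg, C_1, ← C_eq_natCast]
    ring
  rw [hsum, finsetSum_coeff]
  simp only [coeff_C_mul_X_pow]
  rw [sum_ite_eq]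
  split_ifs with h
  · rfl
  · rw [Nat.choose_eq_zero_of_lt (by simpa using h), Nat.cast_zero, mul_zero]

theorem coeff_geomSum_mul_expand [CommSemiring R] {j : ℕ} (hj : 0 < j) (q : R[X]) (r : ℕ) :
    ((∑ a ∈ range j, X ^ a) * expand R j q).coeff r = q.coeff (r / j) := by
  induction q using Polynomial.induction_on' with
  | add p q hp hq => rw [map_add, mul_add, coeff_add, coeff_add, hp, hq]
  | monomial i c =>
    have hgeom : ∀ t, (∑ a ∈ range j, (X : R[X]) ^ a).coeff t = if t < j then 1 else 0 := by
      simp [finsetSum_coeff, coeff_X_pow]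
    have hdiv : i = r / j ↔ i * j ≤ r ∧ r - i * j < j := by
      rw [eq_comm, Nat.div_eq_iff hj]
      omega
    rw [expand_monomial, ← C_mul_X_pow_eq_monomial, mul_left_comm, coeff_C_mul, coeff_mul_X_pow',
      hgeom, coeff_monomial]
    by_cases h₁ : i * j ≤ r <;> by_cases h₂ : r - i * j < j <;> simp [h₁, h₂, hdiv]

noncomputable def stencilPoly (R : Type*) [CommRing R] (k j : ℕ) : R[X] :=
  C ((-1) ^ k) * (∑ a ∈ range j, X ^ a) * (1 - X ^ j) ^ k

variable [CommRing R]

theorem stencilPoly_coeff {k j : ℕ} (hj : 0 < j) (r : ℕ) :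
    (stencilPoly R k j).coeff r = (-1) ^ (k + r / j) * k.choose (r / j) := by
  have hexpand : (1 - X ^ j : R[X]) ^ k = expand R j ((1 - X) ^ k) := by
    rw [map_pow, map_sub, map_one, expand_X]
  rw [stencilPoly, hexpand, mul_assoc, coeff_C_mul, coeff_geomSum_mul_expand hj,
    coeff_one_sub_X_pow, pow_add, mul_assoc]

theorem stencilPoly_coeff_eq_zero {k j r : ℕ} (hj : 0 < j) (hr : j * (k + 1) ≤ r) :
    (stencilPoly R k j).coeff r = 0 := by
  have hk : k < r / j := (Nat.le_div_iff_mul_le hj).2 (by linarith)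
  rw [stencilPoly_coeff hj, Nat.choose_eq_zero_of_lt hk, Nat.cast_zero, mul_zero]

theorem stencilPoly_natDegree_le {k j : ℕ} (hj : 0 < j) :
    (stencilPoly R k j).natDegree ≤ j * (k + 1) :=
  natDegree_le_iff_coeff_eq_zero.2 fun _ hr => stencilPoly_coeff_eq_zero hj hr.le

theorem stencilPoly_two_mul (k j : ℕ) :
    stencilPoly R k (2 * j) = (1 + X ^ j) ^ (k + 1) * stencilPoly R k j := by
  have hgeom :
      ∑ a ∈ range (2 * j), (X : R[X]) ^ a = (1 + X ^ j) * ∑ a ∈ range j, X ^ a := by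
    rw [two_mul, sum_range_add, add_mul, one_mul, mul_sum]
    simp only [pow_add]
  have hsq : (1 - X ^ (2 * j) : R[X]) = (1 + X ^ j) * (1 - X ^ j) := by ring
  rw [stencilPoly, stencilPoly, hgeom, hsq, mul_pow]
  ring

theorem prod_one_add_X_pow_two_pow_mul_stencilPoly (k J : ℕ) :
    (∏ i : Fin J, (1 + X ^ 2 ^ (i : ℕ) : R[X]) ^ (k + 1)) * stencilPoly R k 1
      = stencilPoly R k (2 ^ J) := by
  induction J with
  | zero => simp
  | succ J ih =>
    rw [Fin.prod_univ_castSucc, Nat.pow_succ', stencilPoly_two_mul, ← ih]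
    simp only [Fin.val_castSucc, Fin.val_last]
    ring

end Stencil

theorem phiR_eq_stencilPoly_coeff {N k j d : ℕ} (hj : 0 < j) (h : j * (k + 1) < N)
    (hd : d < N) :
    phiR N k j d = (stencilPoly ℝ k j).coeff ((N - d) % N) := by
  rw [phiR]
  split_ifs with hd₀ hd₁
  · simp [hd₀, stencilPoly_coeff hj]
  · rw [Nat.mod_eq_of_lt (by omega), stencilPoly_coeff_eq_zero hj (by omega)]
  · rw [Nat.mod_eq_of_lt (by omega), stencilPoly_coeff hj]

theorem PhiMat_eq_aeval {N k j : ℕ} (hj : 0 < j) (h : j * (k + 1) < N) :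
    PhiMat N k j = aeval (shiftMat ℝ N) (stencilPoly ℝ k j) := by
  ext m n
  rw [aeval_shiftMat_apply ((stencilPoly_natDegree_le hj).trans_lt h),
    Nat.add_sub_mod_eq_sub_mod_add_sub n.isLt m.isLt, PhiMat,
    Matrix.of_apply, phiR_eq_stencilPoly_coeff hj h (Nat.mod_lt _ m.pos)]

theorem PhiMat_dyadic_decomposition_any_order_general (N k J : ℕ) (h : 2 ^ J * (k + 1) < N)
    (σ : Equiv.Perm (Fin J)) :
    PhiMat N k (2 ^ J) =
      (((List.finRange J).reverse.map fun i => (Pmat N (2 ^ ((σ i : Fin J) : ℕ))) ^ (k + 1)).prod) *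
        PhiMat N k 1 := by
  set Q : Fin J → ℝ[X] := fun i => (1 + X ^ 2 ^ (i : ℕ)) ^ (k + 1)
  have hP : ∀ i : Fin J, Pmat N (2 ^ (i : ℕ)) ^ (k + 1) = aeval (shiftMat ℝ N) (Q i) := by
    intro i
    have hi : 2 ^ (i : ℕ) < N := calc
      2 ^ (i : ℕ) < 2 ^ J := Nat.pow_lt_pow_right (by norm_num) i.isLt
      _ ≤ 2 ^ J * (k + 1) := Nat.le_mul_of_pos_right _ k.succ_pos
      _ < N := h
    rw [Pmat_eq_aeval (by positivity) hi, map_pow]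
  have hlist :
      (List.finRange J).reverse.map (fun i => Pmat N (2 ^ ((σ i : Fin J) : ℕ)) ^ (k + 1))
      = ((List.finRange J).reverse.map (Q ∘ σ)).map (aeval (shiftMat ℝ N)) := by
    simp [List.map_map, hP]
  have h₁ : 1 * (k + 1) < N := (Nat.mul_le_mul_right _ Nat.one_le_two_pow).trans_lt h
  rw [PhiMat_eq_aeval (by positivity) h, PhiMat_eq_aeval one_pos h₁, hlist,
    ← map_list_prod, ← map_mul, List.map_reverse, List.prod_reverse, ← Fin.prod_univ_def,
    Fintype.prod_equiv σ (Q ∘ σ) Q (fun _ => rfl), prod_one_add_X_pow_two_pow_mul_stencilPoly]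

theorem PhiMat_dyadic_decomposition_any_order (N k J : ℕ) (hN : 0 < N) (hk : 0 < k)
    (hJ : 0 < J) (h : 2 ^ J * (k + 1) < N) (σ : Equiv.Perm (Fin J)) :
    PhiMat N k (2 ^ J) =
      (((List.finRange J).reverse.map fun i => (Pmat N (2 ^ ((σ i : Fin J) : ℕ))) ^ (k + 1)).prod) *
        PhiMat N k 1 :=
  PhiMat_dyadic_decomposition_any_order_general N k J h σ
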